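/- arXiv:1501.07224 — 2 statements merged into one kernel-verified Lean document; each statement's English description precedes it below -/
import Mathlib

section
/- Let Ψ(t,s) = (t, s, t², ts). Let N ≥ 4, set M = ⌊N^{1/2}⌋, let ξ_n = (0, n N^{-1/2}) for n = 1,…,M (these are N^{-1/2}-separated points in [0,1]²), let a_n = 1 for all n, and let B_N be the ball of radius N centered at the origin of ℝ⁴. Then there is an absolute constant c > 0 such that |B_N|^{-1/6} ‖∑_{n=1}^{M} e(x·Ψ(ξ_n))‖_{L⁶(B_N)} ≥ c N^{1/6} ‖(a_n)‖_{ℓ²}. Consequently, the estimate |B_N|^{-1/6} ‖∑_{n} a_n e(x·Ψ(ξ_n))‖_{L⁶(B_N)} ≤ C_ε N^{ε} ‖a‖_{ℓ²} fails for this surface for every fixed exponent ε < 1/6, and hence the ℓ²(L⁶) decoupling inequality fails for Ψ(t,s) = (t,s,t²,ts). -/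
open MeasureTheory Set FourierTransform
open scoped ENNReal RealInnerProductSpace

noncomputable section

/-- ℝ⁴ with the Euclidean metric. -/
abbrev R4 := EuclideanSpace ℝ (Fin 4)

/-- `e(z) = e^{2πiz}`. -/
def e2 (z : ℝ) : ℂ := Complex.exp (2 * Real.pi * Complex.I * z)

/-- The dot product `x · y` in ℝ⁴. -/
def dot4 (x y : R4) : ℝ := ∑ i, x i * y i

/-- View a vector of coordinates as a point of ℝ⁴. -/
def toE (v : Fin 4 → ℝ) : R4 := (WithLp.equiv 2 (Fin 4 → ℝ)).symm v

/-- The weight `w_B(x) = (1 + |x-c|/R)^{-100}` associated to the ball with center `c`,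
radius `R`. -/
def wB (c : R4) (R : ℝ) (x : R4) : ℝ := (1 + dist x c / R) ^ (-(100:ℝ))

/-- The weighted norm `‖F‖_{L^p(w)} = (∫ |F|^p w)^{1/p}` (of a scalar function `F`). -/
def wLp (p : ℝ) (w : R4 → ℝ) (F : R4 → ℝ) : ℝ := (∫ x : R4, |F x| ^ p * w x) ^ (1/p)

/-- The measure `w dx`, used to express weighted `L^p` norms for `p ∈ [1,∞]`. -/
def wMeas (c : R4) (R : ℝ) : Measure R4 := volume.withDensity (fun x => ENNReal.ofReal (wB c R x))

/-- The extension operator `E_{S,Ψ} g(x) = ∫_S g(t,s) e(x·Ψ(t,s)) dt ds`. -/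
def ExtOp (Ψ : ℝ × ℝ → R4) (S : Set (ℝ × ℝ)) (g : ℝ × ℝ → ℂ) (x : R4) : ℂ :=
  ∫ ts in S, g ts * e2 (dot4 x (Ψ ts))

/-- The extension operator of a curve, `E_{S,Φ} h(x) = ∫_S h(t) e(x·Φ(t)) dt`. -/
def ExtC (Φ : ℝ → R4) (S : Set ℝ) (h : ℝ → ℂ) (x : R4) : ℂ :=
  ∫ t in S, h t * e2 (dot4 x (Φ t))

/-- The axis-parallel square with lower-left corner `o` and side length `l`. -/
def sqr (o : ℝ × ℝ) (l : ℝ) : Set (ℝ × ℝ) := Icc o.1 (o.1 + l) ×ˢ Icc o.2 (o.2 + l)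

/-- The unit square `[0,1]²`. -/
def unitSq : Set (ℝ × ℝ) := Icc (0:ℝ) 1 ×ˢ Icc (0:ℝ) 1

/-- The square of the standard partition of `[0,1]²` into squares of side `δ` indexed
by `ij`. -/
def gridSq (δ : ℝ) (ij : ℕ × ℕ) : Set (ℝ × ℝ) := sqr (ij.1 * δ, ij.2 * δ) δ

/-- Index set for the standard partition of `[0,1]²` into squares of side `δ`. -/
def gridIdx (δ : ℝ) : Finset (ℕ × ℕ) := Finset.range ⌈δ⁻¹⌉₊ ×ˢ Finset.range ⌈δ⁻¹⌉₊

/-- Partial derivative `Ψ_t`. -/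
def Ψt (Ψ : ℝ × ℝ → R4) (q : ℝ × ℝ) : Fin 4 → ℝ := fun i => deriv (fun u => Ψ (u, q.2) i) q.1
/-- Partial derivative `Ψ_s`. -/
def Ψs (Ψ : ℝ × ℝ → R4) (q : ℝ × ℝ) : Fin 4 → ℝ := fun i => deriv (fun v => Ψ (q.1, v) i) q.2
/-- Partial derivative `Ψ_tt`. -/
def Ψtt (Ψ : ℝ × ℝ → R4) (q : ℝ × ℝ) : Fin 4 → ℝ :=
  fun i => iteratedDeriv 2 (fun u => Ψ (u, q.2) i) q.1
/-- Partial derivative `Ψ_ss`. -/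
def Ψss (Ψ : ℝ × ℝ → R4) (q : ℝ × ℝ) : Fin 4 → ℝ :=
  fun i => iteratedDeriv 2 (fun v => Ψ (q.1, v) i) q.2
/-- Partial derivative `Ψ_ts`. -/
def Ψts (Ψ : ℝ × ℝ → R4) (q : ℝ × ℝ) : Fin 4 → ℝ :=
  fun i => deriv (fun u => deriv (fun v => Ψ (u, v) i) q.2) q.1

/-- Nondegeneracy at a point: `rank [Ψ_t, Ψ_s, Ψ_tt, Ψ_ss, Ψ_ts] = 4`. -/
def NonDegAt (Ψ : ℝ × ℝ → R4) (q : ℝ × ℝ) : Prop :=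
  (Matrix.of ![Ψt Ψ q, Ψs Ψ q, Ψtt Ψ q, Ψss Ψ q, Ψts Ψ q]).rank = 4

/-- Nondegeneracy of a surface: `rank [Ψ_t, Ψ_s, Ψ_tt, Ψ_ss, Ψ_ts] = 4` on `[0,1]²`. -/
def NonDegSurf (Ψ : ℝ × ℝ → R4) : Prop := ∀ q ∈ unitSq, NonDegAt Ψ q

/-- Nondegeneracy of a curve: `inf_{t_i ∈ [0,1]} |det[φ_j^{(i)}(t_i)]| > 0`. -/
def NonDegCurve (Φ : ℝ → R4) : Prop :=
  ∃ c > 0, ∀ t : Fin 4 → ℝ, (∀ i, t i ∈ Icc (0:ℝ) 1) →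
    c ≤ |(Matrix.of (fun i j : Fin 4 => iteratedDeriv ((i:ℕ) + 1) (fun u => Φ u j) (t i))).det|

/-- The quadratic surface `Ψ_A(t,s) = (t, s, A₁t²+2A₂ts+A₃s², A₄t²+2A₅ts+A₆s²)`. -/
def ΨA (A : Fin 6 → ℝ) (q : ℝ × ℝ) : R4 :=
  toE ![q.1, q.2, A 0 * q.1^2 + 2 * A 1 * q.1 * q.2 + A 2 * q.2^2,
        A 3 * q.1^2 + 2 * A 4 * q.1 * q.2 + A 5 * q.2^2]

/-- `c_{1,A} = A₁A₅ − A₂A₄`. -/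
def cA1 (A : Fin 6 → ℝ) : ℝ := A 0 * A 4 - A 1 * A 3
/-- `c_{2,A} = A₁A₆ − A₃A₄`. -/
def cA2 (A : Fin 6 → ℝ) : ℝ := A 0 * A 5 - A 2 * A 3
/-- `c_{3,A} = A₆A₂ − A₅A₃`. -/
def cA3 (A : Fin 6 → ℝ) : ℝ := A 5 * A 1 - A 4 * A 2

/-- `ν`-transversality of two sets, relative to the quadratic surface `Ψ_A`. -/
def Transverse (A : Fin 6 → ℝ) (ν : ℝ) (S₁ S₂ : Set (ℝ × ℝ)) : Prop :=
  ∀ q₁ ∈ S₁, ∀ q₂ ∈ S₂,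
    ν ≤ cA1 A * (q₁.1 - q₂.1)^2 + cA2 A * (q₁.1 - q₂.1) * (q₁.2 - q₂.2)
          + cA3 A * (q₁.2 - q₂.2)^2

/-- The family `𝓛` of coefficient vectors. -/
def LSet (CP : ℝ) : Set (Fin 6 → ℝ) :=
  {A | (∀ i, |A i| ≤ CP) ∧ CP⁻¹ ≤ max |cA1 A| (max |cA2 A| |cA3 A|)}

/-- The surface `Ψ(t,s) = (t,s,t²,ts)`. -/
def Ψtwist (q : ℝ × ℝ) : R4 := toE ![q.1, q.2, q.1 ^ 2, q.1 * q.2]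

/-- The points `ξ_n = (0, n N^{-1/2})`. -/
def ξpt (N : ℝ) (n : ℕ) : ℝ × ℝ := (0, (n : ℝ) * (Real.sqrt N)⁻¹)

lemma phase_eq (N : ℝ) (n : ℕ) (x : R4) :
    dot4 x (Ψtwist (ξpt N n)) = x 1 * ((n : ℝ) * (Real.sqrt N)⁻¹) := by
  simp [dot4, Ψtwist, ξpt, toE, Fin.sum_univ_four]

lemma e2_int_add (m : ℤ) (u : ℝ) : e2 (m + u) = e2 u := by
  unfold e2
  rw [show (((m:ℝ) + u : ℝ) : ℂ) = (m:ℂ) + (u:ℂ) by push_cast; ring,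
    show ((2:ℂ) * Real.pi * Complex.I * ((m:ℂ) + u)) =
      (m : ℂ) * (2 * Real.pi * Complex.I) + 2 * Real.pi * Complex.I * u by ring,
    Complex.exp_add, Complex.exp_int_mul_two_pi_mul_I, one_mul]

lemma e2_re (u : ℝ) : (e2 u).re = Real.cos (2 * Real.pi * u) := by
  unfold e2
  rw [show ((2:ℂ) * Real.pi * Complex.I * u) = ((2 * Real.pi * u : ℝ) : ℂ) * Complex.I by
    push_cast; ring, Complex.exp_ofReal_mul_I_re]

lemma e2_re_ge (u : ℝ) (h0 : 0 ≤ u) (h1 : u ≤ 1/8) : (1:ℝ)/2 ≤ (e2 u).re := by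
  rw [e2_re]
  have hpi := Real.pi_pos
  have h4 := Real.pi_le_four
  have : Real.cos (2 * Real.pi * u) ≥ Real.cos (Real.pi / 4) := by
    apply Real.cos_le_cos_of_nonneg_of_le_pi (by positivity) (by linarith)
    nlinarith
  rw [Real.cos_pi_div_four] at this
  nlinarith [Real.sq_sqrt (by norm_num : (2:ℝ) ≥ 0).le, Real.sqrt_nonneg 2,
    Real.one_le_sqrt.mpr (by norm_num : (1:ℝ) ≤ 2)]

def boxSide (N : ℝ) (k : ℕ) (i : Fin 4) : Set ℝ :=
  if i = 1 then Icc (k * Real.sqrt N) (k * Real.sqrt N + 1/8) else Icc 0 (N/4)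

def box (N : ℝ) (k : ℕ) : Set R4 := {x | ∀ i, x i ∈ boxSide N k i}

lemma box_eq (N : ℝ) (k : ℕ) :
    box N k = (MeasurableEquiv.toLp 2 (Fin 4 → ℝ)).symm ⁻¹' (Set.pi univ (boxSide N k)) := by
  ext x; simp [box, Set.mem_pi]

lemma box_measurable (N : ℝ) (k : ℕ) : MeasurableSet (box N k) := by
  rw [box_eq]
  exact (MeasurableEquiv.toLp 2 (Fin 4 → ℝ)).symm.measurable
    (MeasurableSet.univ_pi (fun i => by unfold boxSide; split <;> exact measurableSet_Icc))

lemma box_volume (N : ℝ) (k : ℕ) :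
    volume (box N k) = ENNReal.ofReal (1/8) * ENNReal.ofReal (N/4) ^ 3 := by
  rw [box_eq, (EuclideanSpace.volume_preserving_symm_measurableEquiv_toLp (Fin 4)).measure_preimage
    (MeasurableSet.univ_pi (fun i => by
      unfold boxSide; split <;> exact measurableSet_Icc)).nullMeasurableSet,
    volume_pi_pi]
  have h1 : ∀ k0 : ℝ, volume (Icc k0 (k0 + 1/8)) = ENNReal.ofReal (1/8) := by
    intro k0; rw [Real.volume_Icc]; norm_num
  have h2 : volume (Icc (0:ℝ) (N/4)) = ENNReal.ofReal (N/4) := by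
    rw [Real.volume_Icc]; norm_num
  rw [Fin.prod_univ_four]
  simp only [boxSide, show ((0:Fin 4) = 1) = False by decide,
    show ((2:Fin 4) = 1) = False by decide,
    show ((3:Fin 4) = 1) = False by decide,
    show ((1:Fin 4) = 1) = True by decide, if_true, if_false, h1, h2]
  ring

lemma coord_le_norm (x : R4) (i : Fin 4) : |x i| ≤ ‖x‖ := by
  rw [EuclideanSpace.norm_eq]
  rw [show |x i| = Real.sqrt (|x i|^2) by rw [Real.sqrt_sq (abs_nonneg _)]]
  apply Real.sqrt_le_sqrt
  rw [sq_abs, show x i ^ 2 = ‖x i‖^2 by rw [Real.norm_eq_abs, sq_abs]]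
  exact Finset.single_le_sum (f := fun j => ‖x j‖^2) (fun j _ => by positivity) (Finset.mem_univ i)

lemma norm_le_of_coords (x : R4) {r : ℝ} (h : ∀ i, |x i| ≤ r) : ‖x‖ ≤ 2 * r := by
  have hr : 0 ≤ r := (abs_nonneg _).trans (h 0)
  rw [EuclideanSpace.norm_eq]
  rw [show 2 * r = Real.sqrt ((2*r)^2) by rw [Real.sqrt_sq (by positivity)]]
  apply Real.sqrt_le_sqrt
  rw [Fin.sum_univ_four]
  have : ∀ i, ‖x i‖^2 ≤ r^2 := fun i => by
    rw [Real.norm_eq_abs]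
    exact pow_le_pow_left₀ (abs_nonneg _) (h i) 2
  nlinarith [this 0, this 1, this 2, this 3]

section main
variable {N : ℝ}

/-- lower bound for the exponential sum on a box -/
lemma sum_lower (hN : 4 ≤ N) (k : ℕ) (x : R4) (hx : x ∈ box N k) :
    ((⌊Real.sqrt N⌋₊ : ℝ)/2) ≤
      ‖∑ n ∈ Finset.Icc 1 ⌊Real.sqrt N⌋₊, e2 (dot4 x (Ψtwist (ξpt N n)))‖ := by
  set M := ⌊Real.sqrt N⌋₊
  have hsN : (2:ℝ) ≤ Real.sqrt N := by
    rw [show (2:ℝ) = Real.sqrt 4 by rw [show (4:ℝ) = 2^2 by norm_num, Real.sqrt_sq]; norm_num]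
    exact Real.sqrt_le_sqrt hN
  have hsNpos : (0:ℝ) < Real.sqrt N := by linarith
  have hx1 := hx 1
  simp only [boxSide, if_pos rfl] at hx1
  -- each term has real part ≥ 1/2
  have hterm : ∀ n ∈ Finset.Icc 1 M, (1:ℝ)/2 ≤ (e2 (dot4 x (Ψtwist (ξpt N n)))).re := by
    intro n hn
    rw [phase_eq]
    set θ := x 1 - k * Real.sqrt N with hθ
    have hθ0 : 0 ≤ θ := by simp only [hθ]; linarith [hx1.1]
    have hθ1 : θ ≤ 1/8 := by simp only [hθ]; linarith [hx1.2]
    have hnM : (n:ℝ) ≤ Real.sqrt N := by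
      have : (n:ℝ) ≤ (M:ℝ) := by exact_mod_cast (Finset.mem_Icc.mp hn).2
      exact this.trans (Nat.floor_le (by positivity))
    have hrw : x 1 * ((n : ℝ) * (Real.sqrt N)⁻¹) =
        ((k * n : ℤ) : ℝ) + θ * ((n : ℝ) * (Real.sqrt N)⁻¹) := by
      have : Real.sqrt N * (Real.sqrt N)⁻¹ = 1 := mul_inv_cancel₀ (ne_of_gt hsNpos)
      push_cast
      have hx1e : x 1 = k * Real.sqrt N + θ := by simp [hθ]
      rw [hx1e]; field_simp
    rw [hrw, e2_int_add]
    apply e2_re_ge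
    · positivity
    · have hfrac : (n:ℝ) * (Real.sqrt N)⁻¹ ≤ 1 := by
        rw [mul_inv_le_iff₀ hsNpos, one_mul]; exact hnM
      calc θ * ((n : ℝ) * (Real.sqrt N)⁻¹) ≤ (1/8) * 1 := by
            apply mul_le_mul hθ1 hfrac (by positivity) (by norm_num)
        _ = 1/8 := by norm_num
  have hre : ((M:ℝ))/2 ≤ (∑ n ∈ Finset.Icc 1 M, e2 (dot4 x (Ψtwist (ξpt N n)))).re := by
    rw [Complex.re_sum]
    calc ((M:ℝ))/2 = ∑ _n ∈ Finset.Icc 1 M, (1:ℝ)/2 := by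
          rw [Finset.sum_const, Nat.card_Icc]; simp; ring
      _ ≤ _ := Finset.sum_le_sum hterm
  exact hre.trans (Complex.re_le_norm _)

end main

lemma arith_aux {n m k : ℝ} (hm : 0 ≤ m) (hn : 0 ≤ n) (h : n^2 ≤ 32*(k*m^3)) :
    (1/16:ℝ)^(6:ℕ) * n * m^(3:ℕ) * (16 * n^4) ≤ k * ((m/2)^(6:ℕ) * (1/8 * (n/4)^3)) := by
  have h2 := mul_le_mul_of_nonneg_right h (show (0:ℝ) ≤ m^3*n^3 by positivity)
  ring_nf at h2 ⊢
  linarith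

set_option maxHeartbeats 1000000 in
lemma key (N : ℝ) (hN : 4 ≤ N) :
    (1/16 : ℝ) * N ^ ((1:ℝ)/6) * Real.sqrt (⌊Real.sqrt N⌋₊) ≤
      (volume (Metric.closedBall (0:R4) N)).toReal ^ (-(1:ℝ)/6) *
        (∫ x in Metric.closedBall (0:R4) N,
          ‖∑ n ∈ Finset.Icc 1 ⌊Real.sqrt N⌋₊, e2 (dot4 x (Ψtwist (ξpt N n)))‖ ^ (6:ℝ))
        ^ ((1:ℝ)/6) := by
  have hN0 : (0:ℝ) < N := by linarith
  set M := ⌊Real.sqrt N⌋₊ with hMdef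
  set K := ⌈Real.sqrt N / 4⌉₊ with hKdef
  set s := Real.sqrt N with hsdef
  have hs2 : (2:ℝ) ≤ s := by
    rw [hsdef, show (2:ℝ) = Real.sqrt 4 by
      rw [show (4:ℝ) = 2^2 by norm_num, Real.sqrt_sq]; norm_num]
    exact Real.sqrt_le_sqrt hN
  have hs0 : (0:ℝ) < s := by linarith
  have hssq : s^2 = N := Real.sq_sqrt hN0.le
  have hMle : (M:ℝ) ≤ s := Nat.floor_le hs0.le
  have hMge : s/2 ≤ (M:ℝ) := by
    have := Nat.lt_floor_add_one s
    have : s - 1 < (M:ℝ) := by linarith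
    linarith
  have hM0 : (0:ℝ) < M := by linarith
  have hKge : s/4 ≤ (K:ℝ) := Nat.le_ceil _
  have hK0 : 0 < K := by
    have : (0:ℝ) < (K:ℝ) := by linarith
    exact_mod_cast this
  set B := Metric.closedBall (0:R4) N with hBdef
  set f := fun x : R4 => ‖∑ n ∈ Finset.Icc 1 M, e2 (dot4 x (Ψtwist (ξpt N n)))‖ ^ (6:ℝ) with hfdef
  -- continuity and integrability
  have hcont : Continuous f := by
    apply Continuous.rpow_const
    · apply Continuous.norm
      apply continuous_finset_sum
      intro n _
      have h1 : Continuous fun x : R4 => dot4 x (Ψtwist (ξpt N n)) := by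
        simp only [phase_eq]
        fun_prop
      unfold e2
      fun_prop
    · exact fun x => Or.inr (by norm_num)
  have hIntB : IntegrableOn f B := by
    exact hcont.continuousOn.integrableOn_compact (isCompact_closedBall 0 N)
  -- boxes are inside B
  have hbox_sub : ∀ k < K, box N k ⊆ B := by
    intro k hk x hx
    have hkr : (k:ℝ) < s/4 := by
      have := (Nat.lt_ceil).mp hk
      linarith
    have habs : ∀ i, |x i| ≤ N/2 := by
      intro i
      have hxi := hx i
      by_cases hi : i = 1
      · subst hi
        simp only [boxSide, if_pos rfl] at hxi
        rw [abs_le]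
        constructor
        · have : (0:ℝ) ≤ k * s := by positivity
          linarith [hxi.1]
        · have h1 : (k:ℝ) * s ≤ s/4 * s := by
            apply mul_le_mul_of_nonneg_right hkr.le hs0.le
          have : s/4 * s = N/4 := by nlinarith
          have h2 : x 1 ≤ N/4 + 1/8 := by linarith [hxi.2]
          linarith
      · simp only [boxSide, if_neg hi] at hxi
        rw [abs_le]
        constructor <;> [linarith [hxi.1]; linarith [hxi.2]]
    have := norm_le_of_coords x habs
    simp only [hBdef, Metric.mem_closedBall, dist_zero_right]
    linarith
  -- boxes are pairwise disjoint
  have hdisj : (↑(Finset.range K) : Set ℕ).Pairwise (Function.onFun Disjoint (box N)) := by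
    intro k _ k' _ hne
    rw [Function.onFun]
    rw [Set.disjoint_left]
    intro x hx hx'
    have h1 := hx 1; have h2 := hx' 1
    simp only [boxSide, if_pos rfl] at h1 h2
    rcases lt_or_gt_of_ne hne with h | h
    · have : ((k:ℝ) + 1) ≤ (k':ℝ) := by exact_mod_cast h
      nlinarith [h1.2, h2.1]
    · have : ((k':ℝ) + 1) ≤ (k:ℝ) := by exact_mod_cast h
      nlinarith [h2.2, h1.1]
  -- volume of box, real version
  have hvol : ∀ k : ℕ, (volume (box N k)).toReal = (1/8) * (N/4)^3 := by
    intro k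
    rw [box_volume N k]
    rw [ENNReal.toReal_mul, ENNReal.toReal_pow, ENNReal.toReal_ofReal (by norm_num),
      ENNReal.toReal_ofReal (by positivity)]
  have hvol_ne_top : ∀ k : ℕ, volume (box N k) ≠ ⊤ := by
    intro k; rw [box_volume N k]
    exact ENNReal.mul_ne_top ENNReal.ofReal_ne_top (ENNReal.pow_ne_top ENNReal.ofReal_ne_top)
  -- lower bound for integral on each box
  set c0 := ((M:ℝ)/2) ^ (6:ℝ) with hc0def
  have hbox_int : ∀ k < K, c0 * ((1/8) * (N/4)^3) ≤ ∫ x in box N k, f x := by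
    intro k hk
    have := setIntegral_ge_of_const_le_real (μ := volume) (box_measurable N k) (hvol_ne_top k)
      (fun x hx => Real.rpow_le_rpow (by positivity) (sum_lower hN k x hx) (by norm_num))
      (hIntB.mono_set (hbox_sub k hk))
    rw [measureReal_def, hvol k] at this
    exact this
  -- total lower bound
  set X := ∫ x in B, f x with hXdef
  set Y := (K:ℝ) * (c0 * ((1/8) * (N/4)^3)) with hYdef
  have hYX : Y ≤ X := by
    have hUnion : ∫ x in (⋃ k ∈ Finset.range K, box N k), f x
        = ∑ k ∈ Finset.range K, ∫ x in box N k, f x := by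
      apply integral_biUnion_finset
      · exact fun k _ => box_measurable N k
      · exact hdisj
      · exact fun k hk => hIntB.mono_set (hbox_sub k (Finset.mem_range.mp hk))
    have hsub : (⋃ k ∈ Finset.range K, box N k) ⊆ B := by
      apply Set.iUnion₂_subset
      exact fun k hk => hbox_sub k (Finset.mem_range.mp hk)
    have h2 : ∫ x in (⋃ k ∈ Finset.range K, box N k), f x ≤ X := by
      apply setIntegral_mono_set hIntB
      · exact Filter.Eventually.of_forall (fun x => by rw [hfdef]; positivity)
      · exact hsub.eventuallyLE
    have h3 : Y ≤ ∑ k ∈ Finset.range K, ∫ x in box N k, f x := by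
      rw [hYdef]
      calc (K:ℝ) * (c0 * ((1/8) * (N/4)^3))
          = ∑ _k ∈ Finset.range K, c0 * ((1/8) * (N/4)^3) := by
            rw [Finset.sum_const, Finset.card_range, nsmul_eq_mul]
        _ ≤ _ := Finset.sum_le_sum (fun k hk => hbox_int k (Finset.mem_range.mp hk))
    linarith [hUnion ▸ h2]
  have hY0 : 0 < Y := by
    rw [hYdef, hc0def]
    have : (0:ℝ) < (K:ℝ) := by exact_mod_cast hK0
    positivity
  -- volume of ball bounds
  set V := (volume B).toReal with hVdef
  have hVle : V ≤ 16 * N^4 := by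
    have hsub : B ⊆ (MeasurableEquiv.toLp 2 (Fin 4 → ℝ)).symm ⁻¹'
        (Set.pi univ (fun _ => Icc (-N) N)) := by
      intro x hx
      simp only [Set.mem_preimage, Set.mem_pi, Set.mem_univ, forall_true_left]
      intro i
      have h1 : |x i| ≤ ‖x‖ := coord_le_norm x i
      have h2 : ‖x‖ ≤ N := by
        simpa [hBdef, dist_zero_right] using hx
      rw [Set.mem_Icc]
      exact abs_le.mp (h1.trans h2)
    have hcube : volume ((MeasurableEquiv.toLp 2 (Fin 4 → ℝ)).symm ⁻¹'
        (Set.pi univ (fun _ : Fin 4 => Icc (-N) N))) = ENNReal.ofReal (2*N) ^ 4 := by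
      rw [(EuclideanSpace.volume_preserving_symm_measurableEquiv_toLp (Fin 4)).measure_preimage
        (MeasurableSet.univ_pi (fun _ => measurableSet_Icc)).nullMeasurableSet, volume_pi_pi]
      have hIcc : volume (Icc (-N) N) = ENNReal.ofReal (2*N) := by
        rw [Real.volume_Icc]; congr 1; ring
      simp [hIcc]
    have := measure_mono (μ := (volume : Measure R4)) hsub
    rw [hcube] at this
    have hfin : (ENNReal.ofReal (2*N))^4 ≠ ⊤ := ENNReal.pow_ne_top ENNReal.ofReal_ne_top
    have := ENNReal.toReal_le_toReal (this.trans_lt (lt_top_iff_ne_top.mpr hfin)).ne hfin |>.mpr this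
    rw [ENNReal.toReal_pow, ENNReal.toReal_ofReal (by positivity)] at this
    calc V ≤ (2*N)^4 := this
      _ = 16 * N^4 := by ring
  have hV0 : 0 < V := by
    have hsub : box N 0 ⊆ B := hbox_sub 0 hK0
    have hmle := measure_mono (μ := (volume : Measure R4)) hsub
    have hBfin : volume B ≠ ⊤ := (measure_closedBall_lt_top (x := (0:R4)) (r := N)).ne
    have hlow : (1/8:ℝ) * (N/4)^3 ≤ V := by
      rw [hVdef, ← hvol 0]
      exact (ENNReal.toReal_le_toReal (hvol_ne_top 0) hBfin).mpr hmle
    nlinarith [pow_pos (show (0:ℝ) < N/4 by linarith) 3]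
  -- final comparison via sixth powers
  have hX0 : 0 ≤ X := hY0.le.trans hYX
  have hW : (0:ℝ) < 16 * N^4 := by positivity
  have e1 : ((1/16:ℝ)^(6:ℕ)) ^ ((1:ℝ)/6) = 1/16 := by
    rw [← Real.rpow_natCast (1/16:ℝ) 6, ← Real.rpow_mul (by norm_num)]
    norm_num
  have e2' : (((M:ℝ))^(3:ℕ)) ^ ((1:ℝ)/6) = Real.sqrt M := by
    rw [← Real.rpow_natCast ((M:ℝ)) 3, ← Real.rpow_mul (Nat.cast_nonneg M),
      Real.sqrt_eq_rpow]
    norm_num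
  have hL6 : (1/16 : ℝ) * N ^ ((1:ℝ)/6) * Real.sqrt M
      = ((1/16:ℝ)^(6:ℕ) * N * (M:ℝ)^(3:ℕ)) ^ ((1:ℝ)/6) := by
    rw [Real.mul_rpow (by positivity) (by positivity),
      Real.mul_rpow (by positivity) hN0.le, e1, e2']
  have hN2 : N^2 ≤ 32 * ((K:ℝ) * (M:ℝ)^3) := by
    have h1 : (s/4) * (s/2)^3 ≤ (K:ℝ) * (M:ℝ)^3 := by
      apply mul_le_mul hKge (pow_le_pow_left₀ (by positivity) hMge 3) (by positivity)
        (Nat.cast_nonneg K)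
    nlinarith [hssq]
  have hcore : (1/16:ℝ)^(6:ℕ) * N * (M:ℝ)^(3:ℕ) ≤ Y / (16 * N^4) := by
    rw [le_div_iff₀ hW, hYdef, hc0def]
    rw [show ((M:ℝ)/2) ^ (6:ℝ) = ((M:ℝ)/2)^(6:ℕ) from Real.rpow_natCast _ 6]
    exact arith_aux (Nat.cast_nonneg M) hN0.le hN2
  have hmono1 : (16 * N^4 : ℝ) ^ (-(1:ℝ)/6) ≤ V ^ (-(1:ℝ)/6) :=
    Real.rpow_le_rpow_of_nonpos hV0 hVle (by norm_num)
  have hmono2 : Y ^ ((1:ℝ)/6) ≤ X ^ ((1:ℝ)/6) := Real.rpow_le_rpow hY0.le hYX (by norm_num)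
  have hprod : (16 * N^4:ℝ)^(-(1:ℝ)/6) * Y^((1:ℝ)/6) ≤ V^(-(1:ℝ)/6) * X^((1:ℝ)/6) :=
    mul_le_mul hmono1 hmono2 (Real.rpow_nonneg hY0.le _) (Real.rpow_nonneg hV0.le _)
  have hdiv : (Y / (16*N^4)) ^ ((1:ℝ)/6) = (16*N^4:ℝ)^(-(1:ℝ)/6) * Y^((1:ℝ)/6) := by
    rw [Real.div_rpow hY0.le hW.le, show (-(1:ℝ)/6) = -((1:ℝ)/6) by ring,
      Real.rpow_neg hW.le, div_eq_mul_inv, mul_comm]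
  calc (1/16 : ℝ) * N ^ ((1:ℝ)/6) * Real.sqrt M
      = ((1/16:ℝ)^(6:ℕ) * N * (M:ℝ)^(3:ℕ)) ^ ((1:ℝ)/6) := hL6
    _ ≤ (Y / (16*N^4)) ^ ((1:ℝ)/6) := Real.rpow_le_rpow (by positivity) hcore (by norm_num)
    _ = (16*N^4:ℝ)^(-(1:ℝ)/6) * Y^((1:ℝ)/6) := hdiv
    _ ≤ V^(-(1:ℝ)/6) * X^((1:ℝ)/6) := hprod

/-- for the surface `Ψ(t,s)=(t,s,t²,ts)`, the exponential sum over the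
`N^{-1/2}`-separated points `ξ_n = (0, n N^{-1/2})`, `1 ≤ n ≤ M = ⌊N^{1/2}⌋`, with
coefficients `a_n = 1`, satisfies `|B_N|^{-1/6} ‖∑ e(x·Ψ(ξ_n))‖_{L⁶(B_N)} ≥ c N^{1/6} ‖a‖_{ℓ²}`;
consequently the `ℓ²(L⁶)` estimate `≤ C_ε N^ε ‖a‖_{ℓ²}` fails for every ε < 1/6. -/

theorem stmt5 :
    (∃ c > 0, ∀ N : ℝ, 4 ≤ N →
      c * N ^ ((1:ℝ)/6) * Real.sqrt (⌊Real.sqrt N⌋₊) ≤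
        (volume (Metric.closedBall (0:R4) N)).toReal ^ (-(1:ℝ)/6) *
          (∫ x in Metric.closedBall (0:R4) N,
            ‖∑ n ∈ Finset.Icc 1 ⌊Real.sqrt N⌋₊, e2 (dot4 x (Ψtwist (ξpt N n)))‖ ^ (6:ℝ))
          ^ ((1:ℝ)/6)) ∧
    (∀ ε : ℝ, ε < 1/6 → ¬ ∃ C > 0, ∀ N : ℝ, 4 ≤ N →
        (volume (Metric.closedBall (0:R4) N)).toReal ^ (-(1:ℝ)/6) *
          (∫ x in Metric.closedBall (0:R4) N,
            ‖∑ n ∈ Finset.Icc 1 ⌊Real.sqrt N⌋₊, e2 (dot4 x (Ψtwist (ξpt N n)))‖ ^ (6:ℝ))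
          ^ ((1:ℝ)/6)
        ≤ C * N ^ ε * Real.sqrt (⌊Real.sqrt N⌋₊)) := by
  constructor
  · exact ⟨1/16, by norm_num, fun N hN => key N hN⟩
  · rintro ε hε ⟨C, hC, hbound⟩
    set d := 1/6 - ε with hd
    have hd0 : 0 < d := by rw [hd]; linarith
    set N := max 4 ((16*C) ^ d⁻¹ + 1) with hNd
    have hN4 : (4:ℝ) ≤ N := le_max_left _ _
    have hN0 : (0:ℝ) < N := by linarith
    have hNgt : (16*C) ^ d⁻¹ < N := lt_of_lt_of_le (lt_add_one _) (le_max_right _ _)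
    have hM0 : (0:ℝ) < Real.sqrt (⌊Real.sqrt N⌋₊) := by
      apply Real.sqrt_pos.mpr
      have h2 : (1:ℝ) ≤ Real.sqrt N := by
        rw [show (1:ℝ) = Real.sqrt 1 by simp]
        exact Real.sqrt_le_sqrt (by linarith)
      have h3 : 1 ≤ ⌊Real.sqrt N⌋₊ := Nat.le_floor (by exact_mod_cast h2)
      exact_mod_cast Nat.lt_of_lt_of_le Nat.zero_lt_one h3
    have h1 := key N hN4
    have h2 := hbound N hN4
    have h3 : (1/16:ℝ) * N ^ ((1:ℝ)/6) ≤ C * N ^ ε :=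
      le_of_mul_le_mul_right (h1.trans h2) hM0
    have hNε : (0:ℝ) < N ^ ε := Real.rpow_pos_of_pos hN0 ε
    have h4 : N ^ d ≤ 16 * C := by
      have hsplit : N ^ ((1:ℝ)/6) = N ^ ε * N ^ d := by
        rw [← Real.rpow_add hN0]; congr 1; rw [hd]; ring
      rw [hsplit] at h3
      have h5 : N ^ d * N ^ ε ≤ (16*C) * N ^ ε := by nlinarith [h3]
      exact le_of_mul_le_mul_right h5 hNε
    have h6 : 16 * C < N ^ d := by
      have h7 := Real.rpow_lt_rpow (Real.rpow_nonneg (by positivity) _) hNgt hd0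
      rwa [← Real.rpow_mul (by positivity : (0:ℝ) ≤ 16*C), inv_mul_cancel₀ hd0.ne',
        Real.rpow_one] at h7
    linarith
end
end

section
/- Let Φ = (φ₁,…,φ₄) : [0,1] → ℝ⁴ be a C⁴ nondegenerate curve, and let I₁, I₂ ⊂ [0,1] be disjoint closed intervals with dist(I₁,I₂) > 0. Then for every t ∈ I₁ and s ∈ I₂, the 4×4 determinant with rows Φ'(t), Φ'(s), Φ''(t), Φ''(s) is nonzero. Consequently, the surface Ψ_Φ(t,s) = Φ(t) + Φ(s) = (φ₁(t)+φ₁(s),…,φ₄(t)+φ₄(s)) satisfies the nondegeneracy condition rank[(Ψ_Φ)_t, (Ψ_Φ)_s, (Ψ_Φ)_{tt}, (Ψ_Φ)_{ss}, (Ψ_Φ)_{ts}] = 4 at every point of I₁ × I₂. -/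
open MeasureTheory Set FourierTransform
open scoped ENNReal RealInnerProductSpace

noncomputable section

-- ### Auxiliary lemmas for `stmt7`

lemma clm_iteratedDeriv (ℓ : R4 →L[ℝ] ℝ) {f : ℝ → R4} (hf : ContDiff ℝ 4 f)
    {i : ℕ} (hi : i ≤ 4) (x : ℝ) :
    iteratedDeriv i (fun u => ℓ (f u)) x = ℓ (iteratedDeriv i f x) := by
  have h := ℓ.iteratedFDeriv_comp_left (hf.contDiffAt (x := x)) (by exact_mod_cast hi)
  rw [iteratedDeriv_eq_iteratedFDeriv, iteratedDeriv_eq_iteratedFDeriv,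
    show (fun u => ℓ (f u)) = ℓ ∘ f from rfl, h]
  rfl

lemma det_ne_aux (Φ : ℝ → R4) (hΦ : ContDiff ℝ 4 Φ) (hnd : NonDegCurve Φ)
    {t s : ℝ} (ht : t ∈ Icc (0:ℝ) 1) (hs : s ∈ Icc (0:ℝ) 1) (hts : t ≠ s) :
    (Matrix.of ![fun j => deriv (fun u => Φ u j) t,
                 fun j => deriv (fun u => Φ u j) s,
                 fun j => iteratedDeriv 2 (fun u => Φ u j) t,
                 fun j => iteratedDeriv 2 (fun u => Φ u j) s]).det ≠ 0 := by
  intro hdet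
  obtain ⟨v, hv0, hvM⟩ := Matrix.exists_mulVec_eq_zero_iff.mpr hdet
  set ℓ : R4 →L[ℝ] ℝ := ∑ j, v j • (EuclideanSpace.proj j : R4 →L[ℝ] ℝ) with hℓ
  have hℓap : ∀ y : R4, ℓ y = ∑ j, v j * y j := by
    intro y
    simp [hℓ, ContinuousLinearMap.sum_apply]
  set F : ℝ → ℝ := fun u => ℓ (Φ u) with hFdef
  have hFC : ContDiff ℝ 4 F := ℓ.contDiff.comp hΦ
  have hcomp : ∀ (i : ℕ), i ≤ 4 → ∀ (x : ℝ) (j : Fin 4),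
      iteratedDeriv i (fun u => Φ u j) x = (iteratedDeriv i Φ x) j := by
    intro i hi x j
    exact clm_iteratedDeriv (EuclideanSpace.proj j) hΦ hi x
  have hF : ∀ (i : ℕ), i ≤ 4 → ∀ x : ℝ,
      iteratedDeriv i F x = ∑ j, iteratedDeriv i (fun u => Φ u j) x * v j := by
    intro i hi x
    rw [hFdef, clm_iteratedDeriv ℓ hΦ hi x, hℓap]
    exact Finset.sum_congr rfl fun j _ => by rw [hcomp i hi x j, mul_comm]
  have hrow : ∀ i : Fin 4, ∑ j, (Matrix.of ![fun j => deriv (fun u => Φ u j) t,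
                 fun j => deriv (fun u => Φ u j) s,
                 fun j => iteratedDeriv 2 (fun u => Φ u j) t,
                 fun j => iteratedDeriv 2 (fun u => Φ u j) s]) i j * v j = 0 := by
    intro i
    have := congrFun hvM i
    simpa [Matrix.mulVec, dotProduct] using this
  have z1 : ∀ x, x = t ∨ x = s → iteratedDeriv 1 F x = 0 := by
    rintro x (rfl | rfl)
    · have := hrow 0
      rw [hF 1 (by norm_num)]
      simpa [iteratedDeriv_one] using this
    · have := hrow 1
      rw [hF 1 (by norm_num)]
      simpa [iteratedDeriv_one] using this
  have z2 : ∀ x, x = t ∨ x = s → iteratedDeriv 2 F x = 0 := by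
    rintro x (rfl | rfl)
    · have := hrow 2
      rw [hF 2 (by norm_num)]
      simpa using this
    · have := hrow 3
      rw [hF 2 (by norm_num)]
      simpa using this
  have hdiff : ∀ (n : ℕ), n < 4 → Differentiable ℝ (iteratedDeriv n F) := by
    intro n hn
    exact hFC.differentiable_iteratedDeriv n (by exact_mod_cast hn)
  have hcont : ∀ (n : ℕ), n < 4 → ∀ a b : ℝ, ContinuousOn (iteratedDeriv n F) (Icc a b) :=
    fun n hn a b => ((hdiff n hn).continuous).continuousOn
  set a := min t s with ha
  set b := max t s with hb
  have hab : a < b := min_lt_max.2 hts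
  have haI : a ∈ Icc (0:ℝ) 1 := by rcases min_choice t s with h | h <;> rw [ha, h] <;> assumption
  have hbI : b ∈ Icc (0:ℝ) 1 := by rcases max_choice t s with h | h <;> rw [hb, h] <;> assumption
  have z1a : iteratedDeriv 1 F a = 0 := z1 a (min_choice t s)
  have z1b : iteratedDeriv 1 F b = 0 := z1 b (max_choice t s)
  have z2a : iteratedDeriv 2 F a = 0 := z2 a (min_choice t s)
  have z2b : iteratedDeriv 2 F b = 0 := z2 b (max_choice t s)
  obtain ⟨ξ, hξ, hξ0⟩ := exists_deriv_eq_zero hab (hcont 1 (by norm_num) a b) (z1a.trans z1b.symm)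
  rw [← iteratedDeriv_succ] at hξ0
  obtain ⟨η₁, hη₁, hη₁0⟩ := exists_deriv_eq_zero hξ.1 (hcont 2 (by norm_num) a ξ)
    (z2a.trans hξ0.symm)
  obtain ⟨η₂, hη₂, hη₂0⟩ := exists_deriv_eq_zero hξ.2 (hcont 2 (by norm_num) ξ b)
    (hξ0.trans z2b.symm)
  rw [← iteratedDeriv_succ] at hη₁0 hη₂0
  obtain ⟨ζ, hζ, hζ0⟩ := exists_deriv_eq_zero (hη₁.2.trans hη₂.1)
    (hcont 3 (by norm_num) η₁ η₂) (hη₁0.trans hη₂0.symm)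
  rw [← iteratedDeriv_succ] at hζ0
  obtain ⟨c, hc, hM⟩ := hnd
  have hmem : ∀ x, a ≤ x → x ≤ b → x ∈ Icc (0:ℝ) 1 :=
    fun x h1 h2 => ⟨haI.1.trans h1, h2.trans hbI.2⟩
  set tv : Fin 4 → ℝ := ![a, a, η₁, ζ] with htv
  have htvI : ∀ i, tv i ∈ Icc (0:ℝ) 1 := by
    intro i
    fin_cases i
    · exact haI
    · exact haI
    · exact hmem η₁ hη₁.1.le (hη₁.2.le.trans hξ.2.le)
    · refine hmem ζ (hη₁.1.le.trans hζ.1.le) (hζ.2.le.trans ?_)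
      exact hη₂.2.le
  set M : Matrix (Fin 4) (Fin 4) ℝ :=
    Matrix.of (fun i j : Fin 4 => iteratedDeriv ((i:ℕ) + 1) (fun u => Φ u j) (tv i)) with hMdef
  have hzero : ∀ i : Fin 4, iteratedDeriv ((i:ℕ) + 1) F (tv i) = 0 := by
    intro i
    fin_cases i
    · exact z1a
    · exact z2a
    · exact hη₁0
    · exact hζ0
  have hMv : M.mulVec v = 0 := by
    funext i
    have h1 : (M.mulVec v) i = ∑ j, iteratedDeriv ((i:ℕ) + 1) (fun u => Φ u j) (tv i) * v j := by
      simp [hMdef, Matrix.mulVec, dotProduct]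
    have h2 := hF ((i:ℕ) + 1) (by omega) (tv i)
    rw [Pi.zero_apply, h1, ← h2, hzero i]
  have hMdet : M.det = 0 := Matrix.exists_mulVec_eq_zero_iff.mp ⟨v, hv0, hMv⟩
  have := hM tv htvI
  rw [← hMdef, hMdet] at this
  simp at this
  exact absurd this (not_le.mpr hc)

lemma rank_sub_le (A : Matrix (Fin 5) (Fin 4) ℝ) (f : Fin 4 → Fin 5) :
    (A.submatrix f (Equiv.refl (Fin 4))).rank ≤ A.rank := by
  have h1 : (A.submatrix f (Equiv.refl (Fin 4))).mulVecLin
      = (LinearMap.funLeft ℝ ℝ f) ∘ₗ A.mulVecLin := by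
    apply LinearMap.ext
    intro w
    simp [Matrix.mulVecLin_apply, Matrix.submatrix_mulVec_equiv]
    rfl
  rw [Matrix.rank, Matrix.rank, h1, LinearMap.range_comp]
  exact Submodule.finrank_map_le _ _

lemma iteratedDeriv_two_eq (f : ℝ → ℝ) : iteratedDeriv 2 f = deriv (deriv f) := by
  rw [show (2:ℕ) = 1 + 1 by norm_num, iteratedDeriv_succ, iteratedDeriv_one]

lemma nondeg_of_det (Φ : ℝ → R4) (t s : ℝ)
    (hdet : (Matrix.of ![fun j => deriv (fun u => Φ u j) t,
                 fun j => deriv (fun u => Φ u j) s,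
                 fun j => iteratedDeriv 2 (fun u => Φ u j) t,
                 fun j => iteratedDeriv 2 (fun u => Φ u j) s]).det ≠ 0) :
    NonDegAt (fun q => Φ q.1 + Φ q.2) (t, s) := by
  have e0 : Ψt (fun q => Φ q.1 + Φ q.2) (t, s) = fun j => deriv (fun u => Φ u j) t := by
    funext j
    simp only [Ψt, PiLp.add_apply]
    exact deriv_add_const _
  have e1 : Ψs (fun q => Φ q.1 + Φ q.2) (t, s) = fun j => deriv (fun u => Φ u j) s := by
    funext j
    simp only [Ψs, PiLp.add_apply]
    exact deriv_const_add _
  have e2 : Ψtt (fun q => Φ q.1 + Φ q.2) (t, s) = fun j => iteratedDeriv 2 (fun u => Φ u j) t := by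
    funext j
    simp only [Ψtt, PiLp.add_apply]
    rw [iteratedDeriv_two_eq, iteratedDeriv_two_eq, deriv_add_const']
  have e3 : Ψss (fun q => Φ q.1 + Φ q.2) (t, s) = fun j => iteratedDeriv 2 (fun u => Φ u j) s := by
    funext j
    simp only [Ψss, PiLp.add_apply]
    rw [iteratedDeriv_two_eq, iteratedDeriv_two_eq, deriv_const_add']
  have e4 : Ψts (fun q => Φ q.1 + Φ q.2) (t, s) = fun _ => (0:ℝ) := by
    funext j
    simp only [Ψts, PiLp.add_apply]
    have h : (fun u => deriv (fun v => Φ u j + Φ v j) s)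
        = fun _ : ℝ => deriv (fun v => Φ v j) s := by
      funext u
      exact deriv_const_add _
    rw [h, deriv_const]
  unfold NonDegAt
  rw [e0, e1, e2, e3, e4]
  set M5 : Matrix (Fin 5) (Fin 4) ℝ := Matrix.of ![fun j => deriv (fun u => Φ u j) t,
                 fun j => deriv (fun u => Φ u j) s,
                 fun j => iteratedDeriv 2 (fun u => Φ u j) t,
                 fun j => iteratedDeriv 2 (fun u => Φ u j) s, fun _ => 0] with hM5
  set D : Matrix (Fin 4) (Fin 4) ℝ := Matrix.of ![fun j => deriv (fun u => Φ u j) t,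
                 fun j => deriv (fun u => Φ u j) s,
                 fun j => iteratedDeriv 2 (fun u => Φ u j) t,
                 fun j => iteratedDeriv 2 (fun u => Φ u j) s] with hD
  have hsub : D = M5.submatrix Fin.castSucc (Equiv.refl (Fin 4)) := by
    ext i j
    fin_cases i <;> rfl
  have hDrank : D.rank = 4 := by
    rw [Matrix.rank_of_isUnit D ((Matrix.isUnit_iff_isUnit_det D).mpr
      (isUnit_iff_ne_zero.mpr hdet))]
    simp
  refine le_antisymm (M5.rank_le_card_width.trans (by simp)) ?_
  calc (4:ℕ) = D.rank := hDrank.symm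
  _ ≤ M5.rank := by rw [hsub]; exact rank_sub_le M5 Fin.castSucc


/-- for a nondegenerate `C⁴` curve `Φ` and separated intervals
`I₁, I₂ ⊆ [0,1]`, the determinant with rows `Φ'(t), Φ'(s), Φ''(t), Φ''(s)` does not
vanish for `t ∈ I₁`, `s ∈ I₂`; consequently `Ψ_Φ(t,s) = Φ(t)+Φ(s)` is nondegenerate
on `I₁ × I₂`. -/
theorem stmt7 (Φ : ℝ → R4) (hΦ : ContDiff ℝ 4 Φ) (hnd : NonDegCurve Φ)
    (a₁ b₁ a₂ b₂ : ℝ) (hI₁ : Icc a₁ b₁ ⊆ Icc 0 1) (hI₂ : Icc a₂ b₂ ⊆ Icc 0 1)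
    (d : ℝ) (hd : 0 < d)
    (hsep : ∀ t ∈ Icc a₁ b₁, ∀ s ∈ Icc a₂ b₂, d ≤ |t - s|) :
    (∀ t ∈ Icc a₁ b₁, ∀ s ∈ Icc a₂ b₂,
      (Matrix.of ![fun j => deriv (fun u => Φ u j) t,
                   fun j => deriv (fun u => Φ u j) s,
                   fun j => iteratedDeriv 2 (fun u => Φ u j) t,
                   fun j => iteratedDeriv 2 (fun u => Φ u j) s]).det ≠ 0) ∧
    (∀ t ∈ Icc a₁ b₁, ∀ s ∈ Icc a₂ b₂,
      NonDegAt (fun q => Φ q.1 + Φ q.2) (t, s)) := by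
  have tne : ∀ t ∈ Icc a₁ b₁, ∀ s ∈ Icc a₂ b₂, t ≠ s := by
    intro t ht s hs heq
    have := hsep t ht s hs
    rw [heq, sub_self, abs_zero] at this
    exact absurd this (not_le.mpr hd)
  exact ⟨fun t ht s hs => det_ne_aux Φ hΦ hnd (hI₁ ht) (hI₂ hs) (tne t ht s hs),
    fun t ht s hs => nondeg_of_det Φ t s
      (det_ne_aux Φ hΦ hnd (hI₁ ht) (hI₂ hs) (tne t ht s hs))⟩
end
end
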